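/- For every integer n ≥ 2 and every θ ∈ [0, π], one has sin((n-1)θ)/((n-1)·sin θ) − sin((n+1)θ)/((n+1)·sin θ) ≤ (4n/(n²−1))·(1 − sin(nθ)/(n·sin θ)), where at θ = 0 and θ = π the quotients sin(mθ)/sin θ are interpreted by their continuous extensions (limiting values); equivalently, the inequality holds for all θ ∈ (0,π) and extends by continuity to the endpoints. -/

import Mathlib

open Real

/-- `sinRatio m θ` is the continuous extension to all of `ℝ` of the quotient
`sin (m θ) / sin θ`, realized via the Chebyshev polynomial of the second kind:
`sin (m θ) / sin θ = U_{m-1}(cos θ)`. -/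
noncomputable def sinRatio (m : ℕ) (θ : ℝ) : ℝ :=
  (Polynomial.Chebyshev.U ℝ ((m : ℤ) - 1)).eval (Real.cos θ)

private noncomputable def hfun (x : ℝ) : ℝ := 3 * Real.sin x / (2 + Real.cos x)

private lemma two_add_cos_pos (x : ℝ) : 0 < 2 + Real.cos x := by
  nlinarith [Real.neg_one_le_cos x]

private lemma hfun_hasDerivAt (x : ℝ) :
    HasDerivAt hfun (3 * (2 * Real.cos x + 1) / (2 + Real.cos x) ^ 2) x := by
  have h := (((Real.hasDerivAt_sin x).const_mul 3).div
    ((Real.hasDerivAt_cos x).const_add 2) (two_add_cos_pos x).ne')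
  refine h.congr_deriv ?_
  congr 1
  symm
  linear_combination (-3 : ℝ) * Real.sin_sq_add_cos_sq x

private lemma hfun_nonneg {x : ℝ} (h0 : 0 ≤ x) (h1 : x ≤ π) : 0 ≤ hfun x :=
  div_nonneg (by nlinarith [Real.sin_nonneg_of_nonneg_of_le_pi h0 h1]) (two_add_cos_pos x).le

private lemma hfun_continuous : Continuous hfun :=
  (continuous_const.mul Real.continuous_sin).div (continuous_const.add Real.continuous_cos)
    (fun x => (two_add_cos_pos x).ne')

private lemma g_inj {a b : ℝ} (ha : -1 ≤ a) (ha' : a ≤ 1) (hb : -1 ≤ b) (hb' : b ≤ 1)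
    (h : 3 * (2 * a + 1) / (2 + a) ^ 2 = 3 * (2 * b + 1) / (2 + b) ^ 2) : a = b := by
  have hA : (0:ℝ) < 2 + a := by linarith
  have hB : (0:ℝ) < 2 + b := by linarith
  rw [div_eq_div_iff (by positivity) (by positivity)] at h
  have key : (a - b) * (4 - 2 * a * b - a - b) = 0 := by linear_combination h / 3
  rcases mul_eq_zero.mp key with h1 | h2
  · linarith
  · have e1 : (1 - a) * (1 - b) ≥ 0 := by nlinarith
    have ea : a = 1 := by nlinarith
    have eb : b = 1 := by nlinarith
    rw [ea, eb]

private lemma hfun_periodic (x : ℝ) (k : ℤ) : hfun (x + k * (2 * π)) = hfun x := by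
  unfold hfun
  rw [Real.sin_add_int_mul_two_pi, Real.cos_add_int_mul_two_pi]

private lemma hfun_neg (x : ℝ) : hfun (-x) = - hfun x := by
  unfold hfun; rw [Real.sin_neg, Real.cos_neg]; ring

private lemma core (n : ℕ) {θ : ℝ} (h0 : 0 ≤ θ) (h1 : θ ≤ π) :
    Real.sin (n * θ) * (2 + Real.cos θ) ≤ n * Real.sin θ * (2 + Real.cos (n * θ)) := by
  rcases Nat.eq_zero_or_pos n with rfl | hn
  · simp
  set ψ : ℝ → ℝ := fun x => n * hfun x - hfun (n * x) with hψ
  have hψc : ContinuousOn ψ (Set.Icc 0 π) :=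
    ((continuous_const.mul hfun_continuous).sub
      (hfun_continuous.comp (continuous_const.mul continuous_id))).continuousOn
  obtain ⟨θ₀, hθ₀, hmin⟩ := isCompact_Icc.exists_isMinOn (Set.nonempty_Icc.2 Real.pi_pos.le) hψc
  have hψ0 : 0 ≤ ψ θ₀ := by
    rcases eq_or_lt_of_le hθ₀.1 with hz | hz
    · simp [hψ, ← hz, hfun, Real.sin_zero]
    rcases eq_or_lt_of_le hθ₀.2 with hp | hp
    · have hn1 : hfun π = 0 := by simp [hfun]
      have hn2 : hfun (n * π) = 0 := by simp [hfun, Real.sin_nat_mul_pi]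
      simp [hψ, hp, hn1, hn2]
    · have hloc : IsLocalMin ψ θ₀ := hmin.isLocalMin (Icc_mem_nhds hz hp)
      have hd1 : HasDerivAt (fun x => hfun ((n:ℝ) * x))
          (3 * (2 * Real.cos ((n:ℝ) * θ₀) + 1) / (2 + Real.cos ((n:ℝ)*θ₀)) ^ 2 * ((n:ℝ) * 1)) θ₀ :=
        (hfun_hasDerivAt ((n:ℝ) * θ₀)).comp θ₀ ((hasDerivAt_id θ₀).const_mul (n:ℝ))
      have hd : HasDerivAt ψ ((n:ℝ) * (3 * (2 * Real.cos θ₀ + 1) / (2 + Real.cos θ₀) ^ 2)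
          - 3 * (2 * Real.cos ((n:ℝ) * θ₀) + 1) / (2 + Real.cos ((n:ℝ)*θ₀)) ^ 2 * ((n:ℝ) * 1)) θ₀ :=
        ((hfun_hasDerivAt θ₀).const_mul (n:ℝ)).sub hd1
      have hzero := hloc.hasDerivAt_eq_zero hd
      have hnne : (n:ℝ) ≠ 0 := Nat.cast_ne_zero.2 hn.ne'
      have heq : 3 * (2 * Real.cos θ₀ + 1) / (2 + Real.cos θ₀) ^ 2
          = 3 * (2 * Real.cos ((n:ℝ) * θ₀) + 1) / (2 + Real.cos ((n:ℝ)*θ₀)) ^ 2 := by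
        have heq' : (n:ℝ) * (3 * (2 * Real.cos θ₀ + 1) / (2 + Real.cos θ₀) ^ 2
            - 3 * (2 * Real.cos ((n:ℝ) * θ₀) + 1) / (2 + Real.cos ((n:ℝ)*θ₀)) ^ 2) = 0 := by
          linear_combination hzero
        rcases mul_eq_zero.mp heq' with h | h
        · exact absurd h hnne
        · linarith
      have hcc : Real.cos θ₀ = Real.cos ((n:ℝ) * θ₀) :=
        g_inj (Real.neg_one_le_cos θ₀) (Real.cos_le_one θ₀)
          (Real.neg_one_le_cos _) (Real.cos_le_one _) heq
      rw [Real.cos_eq_cos_iff] at hcc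
      obtain ⟨k, hk | hk⟩ := hcc
      · have heqh : hfun ((n:ℝ) * θ₀) = hfun θ₀ := by
          rw [hk, show 2 * (k:ℝ) * π + θ₀ = θ₀ + k * (2*π) by ring, hfun_periodic]
        have hh := hfun_nonneg hθ₀.1 hθ₀.2
        have hn1 : (1:ℝ) ≤ n := by exact_mod_cast hn
        simp only [hψ, heqh]
        nlinarith
      · have heqh : hfun ((n:ℝ) * θ₀) = - hfun θ₀ := by
          rw [hk, show 2 * (k:ℝ) * π - θ₀ = (-θ₀) + k * (2*π) by ring, hfun_periodic, hfun_neg]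
        have hh := hfun_nonneg hθ₀.1 hθ₀.2
        simp only [hψ, heqh]
        nlinarith
  have hθ : 0 ≤ ψ θ := le_trans hψ0 (hmin ⟨h0, h1⟩)
  have h2 : hfun ((n:ℝ) * θ) ≤ (n:ℝ) * hfun θ := by simpa [hψ, sub_nonneg] using hθ
  unfold hfun at h2
  rw [mul_div_assoc' (n:ℝ), div_le_div_iff₀ (two_add_cos_pos _) (two_add_cos_pos _)] at h2
  nlinarith [h2]

private lemma sinRatio_eq (m : ℕ) (θ : ℝ) (hθ : θ ∈ Set.Ioo (0:ℝ) π) :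
    sinRatio m θ = Real.sin (m * θ) / Real.sin θ := by
  have hs : 0 < Real.sin θ := Real.sin_pos_of_pos_of_lt_pi hθ.1 hθ.2
  rw [sinRatio, eq_div_iff hs.ne']
  have h := Polynomial.Chebyshev.U_real_cos θ ((m:ℤ) - 1)
  rw [h]
  push_cast
  ring_nf

private lemma sinRatio_continuous (m : ℕ) : Continuous (sinRatio m) :=
  (Polynomial.continuous _).comp Real.continuous_cos

/-- Robertson's inequality: for every integer `n ≥ 2` and every `θ ∈ [0, π]`,
`sin((n-1)θ)/((n-1) sin θ) - sin((n+1)θ)/((n+1) sin θ)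
  ≤ (4n/(n²-1)) (1 - sin(nθ)/(n sin θ))`,
where the quotients `sin(mθ)/sin θ` are interpreted by their continuous
extensions at the endpoints `θ = 0` and `θ = π`. -/
theorem robertson_inequality (n : ℕ) (hn : 2 ≤ n) :
    (∀ m : ℕ, ∀ θ ∈ Set.Ioo (0 : ℝ) π, sinRatio m θ = Real.sin (m * θ) / Real.sin θ) ∧
    (∀ m : ℕ, Continuous (sinRatio m)) ∧
    (∀ θ ∈ Set.Icc (0 : ℝ) π,
      sinRatio (n - 1) θ / ((n : ℝ) - 1) - sinRatio (n + 1) θ / ((n : ℝ) + 1) ≤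
        4 * (n : ℝ) / ((n : ℝ) ^ 2 - 1) * (1 - sinRatio n θ / (n : ℝ))) := by
  have hn1 : (1:ℝ) < (n:ℝ) := by exact_mod_cast lt_of_lt_of_le one_lt_two hn
  refine ⟨sinRatio_eq, sinRatio_continuous, ?_⟩
  have hIoo : ∀ θ ∈ Set.Ioo (0 : ℝ) π,
      sinRatio (n - 1) θ / ((n : ℝ) - 1) - sinRatio (n + 1) θ / ((n : ℝ) + 1) ≤
        4 * (n : ℝ) / ((n : ℝ) ^ 2 - 1) * (1 - sinRatio n θ / (n : ℝ)) := by
    intro θ hθ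
    have hs : 0 < Real.sin θ := Real.sin_pos_of_pos_of_lt_pi hθ.1 hθ.2
    rw [sinRatio_eq _ _ hθ, sinRatio_eq _ _ hθ, sinRatio_eq _ _ hθ]
    have hc1 : ((n - 1 : ℕ) : ℝ) = (n:ℝ) - 1 := by
      have := Nat.cast_sub (R := ℝ) (show 1 ≤ n by omega); simpa using this
    rw [hc1, show ((n:ℝ) - 1) * θ = (n:ℝ)*θ - θ by ring, Real.sin_sub]
    push_cast
    rw [show ((n:ℝ) + 1) * θ = (n:ℝ)*θ + θ by ring, Real.sin_add]
    set S := Real.sin ((n:ℝ)*θ) with hS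
    set C := Real.cos ((n:ℝ)*θ) with hC
    set s := Real.sin θ with hs'
    set c := Real.cos θ with hc'
    have key : S * (2 + c) ≤ (n:ℝ) * s * (2 + C) := core n hθ.1.le hθ.2.le
    have E : (S*c - C*s)/s/((n:ℝ)-1) - (S*c + C*s)/s/((n:ℝ)+1)
        = 4*(n:ℝ)/((n:ℝ)^2-1)*(1 - S/s/(n:ℝ))
          - 2*((n:ℝ)*s*(2+C) - S*(2+c)) / (((n:ℝ)^2-1)*s) := by
      have h1 : s ≠ 0 := hs.ne'
      have h2 : (n:ℝ) - 1 ≠ 0 := by linarith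
      have h3 : (n:ℝ) + 1 ≠ 0 := by linarith
      have h4 : (n:ℝ) ≠ 0 := by linarith
      have h5 : (n:ℝ)^2 - 1 ≠ 0 := by nlinarith
      field_simp
      ring
    have hpos : 0 ≤ 2*((n:ℝ)*s*(2+C) - S*(2+c)) / (((n:ℝ)^2-1)*s) := by
      exact div_nonneg (by linarith) (mul_nonneg (by nlinarith) hs.le)
    rw [E]
    linarith
  have hclosed : IsClosed {θ : ℝ |
      sinRatio (n - 1) θ / ((n : ℝ) - 1) - sinRatio (n + 1) θ / ((n : ℝ) + 1) ≤
        4 * (n : ℝ) / ((n : ℝ) ^ 2 - 1) * (1 - sinRatio n θ / (n : ℝ))} := by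
    apply isClosed_le
    · exact ((sinRatio_continuous _).div_const _).sub ((sinRatio_continuous _).div_const _)
    · exact continuous_const.mul (continuous_const.sub ((sinRatio_continuous _).div_const _))
  intro θ hθ
  have hsub : Set.Icc (0:ℝ) π ⊆ closure (Set.Ioo (0:ℝ) π) := by
    rw [closure_Ioo Real.pi_pos.ne]
  exact closure_minimal hIoo hclosed (hsub hθ)
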